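/- Let k, l be real numbers, 1 < p, q < ∞, and let λ be a polynomial belonging to W^{1,p}_k(Ω) + W^{1,q}_l(Ω). Then λ ∈ P_γ, where γ = max([1 − 3/p − k], [1 − 3/q − l]). -/

import Mathlib

open MeasureTheory
noncomputable section

abbrev R3 : Type := EuclideanSpace ℝ (Fin 3)

/-- the weight ρ(x) = (1+|x|²)^{1/2} -/
def rho (x : R3) : ℝ := Real.sqrt (1 + ‖x‖ ^ 2)

/-- partial derivative ∂ᵢ -/
def pd (i : Fin 3) (u : R3 → ℝ) : R3 → ℝ :=
  fun x => fderiv ℝ u x (EuclideanSpace.single i 1)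

/-- iterated derivative D^λ for a multi-index λ ∈ ℕ³ -/
def Dm (lam : Fin 3 → ℕ) (u : R3 → ℝ) : R3 → ℝ :=
  (pd 0)^[lam 0] ((pd 1)^[lam 1] ((pd 2)^[lam 2] u))

/-- length |λ| of a multi-index -/
def mdeg (lam : Fin 3 → ℕ) : ℕ := lam 0 + lam 1 + lam 2

/-- Laplacian -/
def lap (u : R3 → ℝ) : R3 → ℝ := fun x => ∑ i, pd i (pd i u) x

/-- gradient -/
def graD (u : R3 → ℝ) (x : R3) : R3 := WithLp.toLp 2 (fun i => pd i u x)

/-- divergence of a vector field -/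
def divg (v : R3 → R3) : R3 → ℝ := fun x => ∑ i, pd i (fun y => v y i) x

/-- componentwise Laplacian -/
def lapV (v : R3 → R3) (x : R3) : R3 := WithLp.toLp 2 (fun i => lap (fun y => v y i) x)

/-- deformation tensor D(v)ᵢⱼ = ½(∂ⱼvᵢ + ∂ᵢvⱼ) -/
def defT (v : R3 → R3) (i j : Fin 3) : R3 → ℝ :=
  fun x => (pd j (fun y => v y i) x + pd i (fun y => v y j) x) / 2

/-- euclidean dot product -/
def dot (a b : R3) : ℝ := ∑ i, a i * b i

/-- membership in the weighted Sobolev space W^{m,p}_k(Ω) -/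
def memW (m : ℕ) (p : ℝ) (k : ℝ) (Ω : Set R3) (u : R3 → ℝ) : Prop :=
  ∀ lam : Fin 3 → ℕ, mdeg lam ≤ m →
    MemLp (fun x => rho x ^ (k - m + mdeg lam) * Dm lam u x)
      (ENNReal.ofReal p) (volume.restrict Ω)

/-- the norm of W^{m,p}_k(Ω) -/
def Wnorm (m : ℕ) (p : ℝ) (k : ℝ) (Ω : Set R3) (u : R3 → ℝ) : ℝ :=
  (∑ lam : Fin 3 → Fin (m + 1),
    if mdeg (fun i => (lam i : ℕ)) ≤ m then
      (eLpNorm (fun x => rho x ^ (k - m + mdeg (fun i => (lam i : ℕ))) * Dm (fun i => (lam i : ℕ)) u x)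
        (ENNReal.ofReal p) (volume.restrict Ω)).toReal ^ p
    else 0) ^ (1 / p)

/-- vector-valued weighted Sobolev membership (componentwise) -/
def memWV (m : ℕ) (p : ℝ) (k : ℝ) (Ω : Set R3) (v : R3 → R3) : Prop :=
  ∀ i, memW m p k Ω fun x => v x i

/-- vector-valued norm -/
def WnormV (m : ℕ) (p : ℝ) (k : ℝ) (Ω : Set R3) (v : R3 → R3) : ℝ :=
  ∑ i, Wnorm m p k Ω fun x => v x i

/-- membership in H^p_k(div,Ω) -/
def memHdiv (p k : ℝ) (Ω : Set R3) (v : R3 → R3) : Prop :=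
  (∀ i, memW 0 p k Ω fun x => v x i) ∧ memW 0 p (k + 1) Ω (divg v)

/-- norm of H^p_k(div,Ω) -/
def Hdivnorm (p k : ℝ) (Ω : Set R3) (v : R3 → R3) : ℝ :=
  ((∑ i, Wnorm 0 p k Ω (fun x => v x i) ^ p) + Wnorm 0 p (k + 1) Ω (divg v) ^ p) ^ (1 / p)

/-- Gagliardo fractional Sobolev norm W^{s,p}(Γ) on a surface Γ (surface measure = 2-dim Hausdorff) -/
def fracBnorm (s p : ℝ) (Γ : Set R3) (φ : R3 → ℝ) : ℝ :=
  (∫ x in Γ, |φ x| ^ p ∂μH[2]) ^ (1 / p) +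
  (∫ x in Γ, ∫ y in Γ, |φ x - φ y| ^ p / dist x y ^ (2 + s * p) ∂μH[2] ∂μH[2]) ^ (1 / p)

/-- smooth functions compactly supported in Ω (the space D(Ω)) -/
def testIn (Ω : Set R3) (φ : R3 → ℝ) : Prop :=
  ContDiff ℝ (⊤ : ℕ∞) φ ∧ HasCompactSupport φ ∧ tsupport φ ⊆ Ω

/-- restrictions to closure Ω of smooth compactly supported functions (the space D(cl Ω)) -/
def testCl (φ : R3 → ℝ) : Prop := ContDiff ℝ (⊤ : ℕ∞) φ ∧ HasCompactSupport φ

def testInV (Ω : Set R3) (v : R3 → R3) : Prop := ∀ i, testIn Ω fun x => v x i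
def testClV (v : R3 → R3) : Prop := ∀ i, testCl fun x => v x i

/-- evaluation of a polynomial in 3 variables as a function on ℝ³ -/
def polyFun (q : MvPolynomial (Fin 3) ℝ) : R3 → ℝ := fun x => MvPolynomial.eval (fun i => x i) q

/-- evaluation of a polynomial vector field -/
def polyFunV (Λ : Fin 3 → MvPolynomial (Fin 3) ℝ) : R3 → R3 := fun x => WithLp.toLp 2 (fun i => polyFun (Λ i) x)

/-- polynomials of (total) degree ≤ j ; by convention {0} if j < 0 -/
def Pset (j : ℤ) : Set (MvPolynomial (Fin 3) ℝ) := {q | q = 0 ∨ (q.totalDegree : ℤ) ≤ j}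

/-- harmonic polynomials -/
def harmP (q : MvPolynomial (Fin 3) ℝ) : Prop := ∀ x, lap (polyFun q) x = 0

/-- the space N_j of Stokes polynomials -/
def Nset (j : ℤ) : Set ((Fin 3 → MvPolynomial (Fin 3) ℝ) × MvPolynomial (Fin 3) ℝ) :=
  {lm | (∀ i, lm.1 i ∈ Pset j) ∧ lm.2 ∈ Pset (j - 1) ∧ harmP lm.2 ∧
    (∀ x, ∀ i : Fin 3, -lapV (polyFunV lm.1) x i + graD (polyFun lm.2) x i = 0) ∧
    (∀ x, divg (polyFunV lm.1) x = 0)}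

/-- dual norm of a functional with respect to a set of test elements and a norm -/
def dualNormOn {A : Type*} (S : Set A) (nrm : A → ℝ) (f : A → ℝ) : ℝ :=
  sInf {C | 0 ≤ C ∧ ∀ a ∈ S, |f a| ≤ C * nrm a}

/-- tangential part of a vector v with respect to the normal n -/
def tang (n v : R3) : R3 := WithLp.toLp 2 (fun i => v i - dot n v * n i)

/-- the vector D(u)n -/
def defTn (u : R3 → R3) (n : R3 → R3) (x : R3) : R3 := WithLp.toLp 2 (fun i => ∑ j, defT u i j x * n x j)

open MvPolynomial Pointwise

lemma homog_eval_mul {φ : MvPolynomial (Fin 3) ℝ} {n : ℕ} (h : φ.IsHomogeneous n)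
    (r : ℝ) (y : Fin 3 → ℝ) :
    MvPolynomial.eval (fun i => r * y i) φ = r ^ n * MvPolynomial.eval y φ := by
  rw [MvPolynomial.eval_eq, MvPolynomial.eval_eq, Finset.mul_sum]
  refine Finset.sum_congr rfl fun d hd => ?_
  have hdeg : ∑ i ∈ d.support, d i = n := by
    have := h (MvPolynomial.mem_support_iff.mp hd)
    rw [show (1 : Fin 3 → ℕ) = fun _ => 1 from rfl, ← Finsupp.degree_eq_weight_one] at this
    exact this
  calc φ.coeff d * ∏ i ∈ d.support, (r * y i) ^ d i
      = φ.coeff d * ((∏ i ∈ d.support, r ^ d i) * ∏ i ∈ d.support, y i ^ d i) := by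
        simp_rw [mul_pow, Finset.prod_mul_distrib]
    _ = r ^ n * (φ.coeff d * ∏ i ∈ d.support, y i ^ d i) := by
        rw [Finset.prod_pow_eq_pow_sum, hdeg]; ring

lemma top_component_ne_zero (φ : MvPolynomial (Fin 3) ℝ) (h : φ ≠ 0) :
    homogeneousComponent φ.totalDegree φ ≠ 0 := by
  obtain ⟨d, hd, hdeg⟩ := Finset.exists_mem_eq_sup φ.support
    (MvPolynomial.support_nonempty.mpr h) (fun s => s.sum fun _ e => e)
  intro hc
  have h2 := coeff_homogeneousComponent (n := φ.totalDegree) (φ := φ) d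
  rw [hc] at h2
  have hdd : (d.degree : ℕ) = φ.totalDegree := by
    rw [Finsupp.degree, MvPolynomial.totalDegree, hdeg]; rfl
  rw [if_pos hdd] at h2
  exact (MvPolynomial.mem_support_iff.mp hd) (by simpa using h2.symm)

/-- key lower bound: away from the origin, in a suitable cone, a nonzero polynomial
is bounded below by `c R^d`. -/
lemma poly_lower_bound (φ : MvPolynomial (Fin 3) ℝ) (h : φ ≠ 0) :
    ∃ (ξ : R3) (δ c : ℝ), 0 < δ ∧ 0 < c ∧ 2 * δ ≤ ‖ξ‖ ∧
      ∀ R : ℝ, 1 / δ ≤ R → ∀ y ∈ Metric.ball ξ δ,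
        c * R ^ φ.totalDegree ≤ |polyFun φ (R • y)| := by
  classical
  set d := φ.totalDegree with hd
  set ψ := homogeneousComponent d φ with hψ
  have hψne : ψ ≠ 0 := top_component_ne_zero φ h
  -- a point where ψ doesn't vanish
  have hex : ∃ x : Fin 3 → ℝ, MvPolynomial.eval x ψ ≠ 0 := by
    by_contra hc
    push_neg at hc
    exact hψne (MvPolynomial.funext fun x => by simp [hc x])
  obtain ⟨x₀, hx₀⟩ := hex
  -- the evaluation function, as a continuous function on R3
  set g : R3 → ℝ := fun y => MvPolynomial.eval (fun i => y i) ψ with hg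
  have hgc : Continuous g := by
    have h1 : Continuous fun y : R3 => (fun i => y i : Fin 3 → ℝ) :=
      continuous_pi fun i => by exact (continuous_apply i).comp (PiLp.continuous_ofLp 2 _)
    have h2 : Continuous ((fun x : Fin 3 → ℝ => MvPolynomial.eval x ψ) ∘
        (fun y : R3 => (fun i => y i))) :=
      Continuous.comp (MvPolynomial.continuous_eval _) h1
    exact h2
  -- find ξ ≠ 0 with g ξ ≠ 0
  have hx₀' : g ((WithLp.equiv 2 (Fin 3 → ℝ)).symm x₀) ≠ 0 := hx₀
  obtain ⟨ξ, hξg, hξ0⟩ : ∃ ξ : R3, g ξ ≠ 0 ∧ ξ ≠ 0 := by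
    set x₁ : R3 := (WithLp.equiv 2 (Fin 3 → ℝ)).symm x₀
    by_cases h0 : x₁ = 0
    · have hopen : IsOpen {y : R3 | g y ≠ 0} := isOpen_ne.preimage hgc
      obtain ⟨r, hr, hball⟩ := Metric.isOpen_iff.mp hopen x₁ hx₀'
      refine ⟨x₁ + (r / 2) • EuclideanSpace.single (0 : Fin 3) (1 : ℝ), hball ?_, ?_⟩
      · rw [Metric.mem_ball, dist_eq_norm]
        simp only [add_sub_cancel_left, norm_smul, EuclideanSpace.norm_single]
        rw [norm_one, mul_one, Real.norm_eq_abs, abs_of_pos (by linarith)]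
        linarith
      · rw [h0, zero_add]
        intro hc
        have : ‖(r / 2) • EuclideanSpace.single (0 : Fin 3) (1 : ℝ)‖ = 0 := by rw [hc, norm_zero]
        rw [norm_smul, EuclideanSpace.norm_single, norm_one, mul_one, Real.norm_eq_abs,
          abs_of_pos (by linarith)] at this
        linarith
    · exact ⟨x₁, hx₀', h0⟩
  -- the function G
  set G : ℝ × R3 → ℝ := fun z =>
    ∑ e ∈ Finset.range (d + 1), z.1 ^ (d - e) *
      MvPolynomial.eval (fun i => z.2 i) (homogeneousComponent e φ) with hG
  have hGc : Continuous G := by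
    apply continuous_finset_sum
    intro e _
    apply Continuous.mul
    · exact (continuous_fst.pow _)
    · have h1 : Continuous fun z : ℝ × R3 => (fun i => z.2 i : Fin 3 → ℝ) :=
        continuous_pi fun i => (continuous_apply i).comp ((PiLp.continuous_ofLp 2 _).comp continuous_snd)
      have h2 : Continuous ((fun x : Fin 3 → ℝ => MvPolynomial.eval x (homogeneousComponent e φ)) ∘
          (fun z : ℝ × R3 => (fun i => z.2 i))) :=
        Continuous.comp (MvPolynomial.continuous_eval _) h1
      exact h2
  have hG0 : G (0, ξ) = g ξ := by
    rw [hG]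
    simp only
    rw [Finset.sum_eq_single d]
    · simp [hg, hψ]
    · intro e he hne
      have he' : e < d + 1 := Finset.mem_range.mp he
      rw [zero_pow (by omega : d - e ≠ 0)]
      ring
    · intro hdd; exact absurd (Finset.self_mem_range_succ d) hdd
  -- continuity at (0, ξ)
  set c : ℝ := |g ξ| / 2 with hc
  have hcpos : 0 < c := by
    rw [hc]; positivity
  obtain ⟨δ₁, hδ₁, hδ₁p⟩ := Metric.continuousAt_iff.mp hGc.continuousAt (ε := c) hcpos
  set δ : ℝ := min δ₁ ‖ξ‖ / 2 with hδ
  have hδpos : 0 < δ := by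
    rw [hδ]
    have : 0 < ‖ξ‖ := norm_pos_iff.mpr hξ0
    positivity
  refine ⟨ξ, δ, c, hδpos, hcpos, ?_, ?_⟩
  · rw [hδ]
    have : min δ₁ ‖ξ‖ ≤ ‖ξ‖ := min_le_right _ _
    linarith
  intro R hR y hy
  have hRpos : 0 < R := lt_of_lt_of_le (by positivity) hR
  have hRinv : 1 / R ≤ δ := by
    have := one_div_le_one_div_of_le (by positivity : (0:ℝ) < 1 / δ) hR
    rwa [one_div_one_div] at this
  have hδlt : δ < δ₁ := by
    rw [hδ]
    have : min δ₁ ‖ξ‖ ≤ δ₁ := min_le_left _ _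
    have h2 : 0 < δ₁ := hδ₁
    linarith [hδpos]
  -- |G(1/R, y)| ≥ c
  have hGbound : c ≤ |G (1 / R, y)| := by
    have hdist : dist ((1 / R, y) : ℝ × R3) (0, ξ) < δ₁ := by
      rw [Prod.dist_eq]
      apply max_lt
      · rw [Real.dist_eq, sub_zero, abs_of_pos (by positivity)]
        linarith
      · exact lt_trans (Metric.mem_ball.mp hy) hδlt
    have h1 : |G (1 / R, y) - G (0, ξ)| < c := by
      have := hδ₁p hdist
      rwa [Real.dist_eq] at this
    have h2 : |G (0, ξ)| = 2 * c := by rw [hG0, hc]; ring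
    have h3 := abs_sub_abs_le_abs_sub (G (0, ξ)) (G (1 / R, y))
    rw [abs_sub_comm] at h3
    linarith
  -- the identity polyFun φ (R • y) = R^d * G (1/R, y)
  have hiden : polyFun φ (R • y) = R ^ d * G (1 / R, y) := by
    have hsmul : (fun i => (R • y) i : Fin 3 → ℝ) = fun i => R * y i := by
      funext i; simp [PiLp.smul_apply, smul_eq_mul]
    rw [polyFun, hsmul]
    conv_lhs => rw [← MvPolynomial.sum_homogeneousComponent φ]
    rw [map_sum, hG]
    simp only
    rw [Finset.mul_sum]
    refine Finset.sum_congr rfl fun e he => ?_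
    rw [homog_eval_mul (homogeneousComponent_isHomogeneous e φ) R y]
    have held : e ≤ d := by simpa [Nat.lt_succ_iff] using Finset.mem_range.mp he
    have hRe : R ^ d * (1 / R) ^ (d - e) = R ^ e := by
      rw [one_div, inv_pow, ← Nat.sub_add_cancel held, pow_add]
      field_simp
      rw [Nat.add_sub_cancel]
    rw [← mul_assoc, hRe]
  rw [hiden, abs_mul, abs_of_pos (by positivity : (0:ℝ) < R ^ d)]
  calc c * R ^ d = R ^ d * c := by ring
    _ ≤ R ^ d * |G (1 / R, y)| := by
        apply mul_le_mul_of_nonneg_left hGbound (by positivity)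


lemma rho_pos (x : R3) : 0 < rho x := Real.sqrt_pos.mpr (by positivity)

lemma norm_le_rho (x : R3) : ‖x‖ ≤ rho x := by
  rw [rho]
  calc ‖x‖ = Real.sqrt (‖x‖ ^ 2) := (Real.sqrt_sq (norm_nonneg x)).symm
    _ ≤ Real.sqrt (1 + ‖x‖ ^ 2) := Real.sqrt_le_sqrt (by linarith)

lemma rho_le (x : R3) : rho x ≤ 1 + ‖x‖ := by
  rw [rho]
  calc Real.sqrt (1 + ‖x‖ ^ 2) ≤ Real.sqrt ((1 + ‖x‖) ^ 2) :=
        Real.sqrt_le_sqrt (by nlinarith [norm_nonneg x])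
    _ = 1 + ‖x‖ := Real.sqrt_sq (by positivity)

lemma half_bound {A B C : ℝ} (h : C ≤ |A + B|) (h2 : |A| < C / 2) : C / 2 ≤ |B| := by
  have h3 := abs_add_le A B
  linarith

lemma rpow_min_le {a b s t : ℝ} (ha : 0 < a) (has : a ≤ s) (hsb : s ≤ b) :
    min (a ^ t) (b ^ t) ≤ s ^ t := by
  rcases le_or_gt 0 t with ht | ht
  · exact (min_le_left _ _).trans (Real.rpow_le_rpow ha.le has ht)
  · exact (min_le_right _ _).trans (Real.rpow_le_rpow_of_nonpos (ha.trans_le has) hsb ht.le)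

lemma weight_bound {aa bb R kk s : ℝ} (haa : 0 < aa) (hab : aa ≤ bb) (hR : 0 < R)
    (h1 : aa * R ≤ s) (h2 : s ≤ bb * R) :
    min (aa ^ kk) (bb ^ kk) * R ^ kk ≤ s ^ kk := by
  have h := rpow_min_le (t := kk) (mul_pos haa hR) h1 h2
  rw [Real.mul_rpow haa.le hR.le, Real.mul_rpow (haa.le.trans hab) hR.le] at h
  rwa [← min_mul_of_nonneg _ _ (Real.rpow_nonneg hR.le kk)] at h


set_option maxHeartbeats 2000000 in
/-- a polynomial in W^{1,p}_k(Ω) + W^{1,q}_l(Ω) has degree at most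
γ = max([1 − 3/p − k], [1 − 3/q − l]). -/
theorem polynomial_in_sum_of_weighted_spaces (Ω' : Set R3) (hΩ' : IsOpen Ω')
    (hb : Bornology.IsBounded Ω') (Ω : Set R3) (hΩ : Ω = (closure Ω')ᶜ)
    (k l : ℝ) (p q : ℝ) (hp : 1 < p) (hq : 1 < q)
    (lam : MvPolynomial (Fin 3) ℝ)
    (hlam : ∃ u v : R3 → ℝ, memW 1 p k Ω u ∧ memW 1 q l Ω v ∧
      ∀ x, polyFun lam x = u x + v x) :
    lam ∈ Pset (max ⌊1 - 3 / p - k⌋ ⌊1 - 3 / q - l⌋) := by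
  by_contra hcon
  rw [Pset, Set.mem_setOf_eq] at hcon
  push_neg at hcon
  obtain ⟨hne, hdeg⟩ := hcon
  set d := lam.totalDegree with hdd
  have hp0 : (0:ℝ) < p := by linarith
  have hq0 : (0:ℝ) < q := by linarith
  -- exponent positivity
  have hmax := max_lt_iff.mp hdeg
  have hkd : 1 - 3 / p - k < (d:ℝ) := by
    have h1 : (⌊1 - 3 / p - k⌋ : ℤ) + 1 ≤ (d : ℤ) := hmax.1
    have h2 := Int.lt_floor_add_one (1 - 3 / p - k)
    have h3 : ((⌊1 - 3 / p - k⌋ : ℝ) + 1) ≤ (d : ℝ) := by exact_mod_cast h1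
    linarith
  have hld : 1 - 3 / q - l < (d:ℝ) := by
    have h1 : (⌊1 - 3 / q - l⌋ : ℤ) + 1 ≤ (d : ℤ) := hmax.2
    have h2 := Int.lt_floor_add_one (1 - 3 / q - l)
    have h3 : ((⌊1 - 3 / q - l⌋ : ℝ) + 1) ≤ (d : ℝ) := by exact_mod_cast h1
    linarith
  set κu : ℝ := k - 1 + (d:ℝ) with hκu
  set κv : ℝ := l - 1 + (d:ℝ) with hκv
  set αu : ℝ := κu * p + 3 with hαudef
  set αv : ℝ := κv * q + 3 with hαvdef
  have hαu : 0 < αu := by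
    have h1 : -(3 / p) < κu := by rw [hκu]; linarith
    have h2 : -3 < κu * p := by
      have h := mul_lt_mul_of_pos_right h1 hp0
      rwa [neg_mul, div_mul_cancel₀ 3 (ne_of_gt hp0)] at h
    rw [hαudef]; linarith
  have hαv : 0 < αv := by
    have h1 : -(3 / q) < κv := by rw [hκv]; linarith
    have h2 : -3 < κv * q := by
      have h := mul_lt_mul_of_pos_right h1 hq0
      rwa [neg_mul, div_mul_cancel₀ 3 (ne_of_gt hq0)] at h
    rw [hαvdef]; linarith
  obtain ⟨u, v, hu, hv, huv⟩ := hlam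
  have hΩm : MeasurableSet Ω := by
    rw [hΩ]; exact isClosed_closure.isOpen_compl.measurableSet
  set μres := volume.restrict Ω with hμres
  set P := ENNReal.ofReal p with hP
  set Q := ENNReal.ofReal q with hQ
  have hPne0 : P ≠ 0 := by rw [hP]; simp [ENNReal.ofReal_eq_zero]; linarith
  have hQne0 : Q ≠ 0 := by rw [hQ]; simp [ENNReal.ofReal_eq_zero]; linarith
  have hPnt : P ≠ ⊤ := ENNReal.ofReal_ne_top
  have hQnt : Q ≠ ⊤ := ENNReal.ofReal_ne_top
  have hPtr : P.toReal = p := ENNReal.toReal_ofReal hp0.le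
  have hQtr : Q.toReal = q := ENNReal.toReal_ofReal hq0.le
  set wu : R3 → ℝ := fun x => rho x ^ (k - 1) * u x with hwu
  set wv : R3 → ℝ := fun x => rho x ^ (l - 1) * v x with hwv
  have hu0 : MemLp wu P μres := by
    have h := hu (fun _ => 0) (by simp [mdeg])
    simpa [wu, Dm, mdeg] using h
  have hv0 : MemLp wv Q μres := by
    have h := hv (fun _ => 0) (by simp [mdeg])
    simpa [wv, Dm, mdeg] using h
  set Nu : ℝ := (eLpNorm wu P μres).toReal with hNu
  set Nv : ℝ := (eLpNorm wv Q μres).toReal with hNv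
  have hNufin : eLpNorm wu P μres ≠ ⊤ := hu0.2.ne
  have hNvfin : eLpNorm wv Q μres ≠ ⊤ := hv0.2.ne
  -- the cone lower bound
  obtain ⟨ξ, δ, c, hδ, hc, hδξ, hbd⟩ := poly_lower_bound lam hne
  set aξ : ℝ := ‖ξ‖ - δ with haξ
  have hapos : 0 < aξ := by rw [haξ]; linarith
  set bξ : ℝ := ‖ξ‖ + δ + 1 with hbξ
  have habξ : aξ ≤ bξ := by rw [haξ, hbξ]; linarith
  set B := Metric.ball ξ δ with hB
  have hBpos : 0 < volume B := Metric.isOpen_ball.measure_pos volume ⟨ξ, Metric.mem_ball_self hδ⟩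
  have hBfin : volume B < ⊤ := measure_ball_lt_top
  set εB : ℝ := (volume B).toReal with hεBdef
  have hεBpos : 0 < εB := ENNReal.toReal_pos hBpos.ne' hBfin.ne
  obtain ⟨r₀, hr₀⟩ := hb.closure.subset_closedBall 0
  -- constants
  set mk : ℝ := min (aξ ^ (k - 1)) (bξ ^ (k - 1)) with hmk
  set ml : ℝ := min (aξ ^ (l - 1)) (bξ ^ (l - 1)) with hml
  have hmkpos : 0 < mk := lt_min (Real.rpow_pos_of_pos hapos _)
    (Real.rpow_pos_of_pos (hapos.trans_le habξ) _)
  have hmlpos : 0 < ml := lt_min (Real.rpow_pos_of_pos hapos _)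
    (Real.rpow_pos_of_pos (hapos.trans_le habξ) _)
  set Cu : ℝ := mk * (c / 2) with hCu
  set Cv : ℝ := ml * (c / 2) with hCv
  have hCupos : 0 < Cu := by rw [hCu]; positivity
  have hCvpos : 0 < Cv := by rw [hCv]; positivity
  set Au : ℝ := Nu ^ p / Cu ^ p with hAu
  set Av : ℝ := Nv ^ q / Cv ^ q with hAv
  set R₀ : ℝ := max (max 1 (1 / δ)) ((r₀ + 1) / aξ) with hR₀
  -- the key estimate
  have key : ∀ R : ℝ, R₀ ≤ R → εB ≤ Au * R ^ (-αu) + Av * R ^ (-αv) := by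
    intro R hR
    have hR1 : 1 ≤ R := le_trans (le_trans (le_max_left _ _) (le_max_left _ _)) hR
    have hRδ : 1 / δ ≤ R := le_trans (le_trans (le_max_right _ _) (le_max_left _ _)) hR
    have hRr₀ : (r₀ + 1) / aξ ≤ R := le_trans (le_max_right _ _) hR
    have hRpos : (0:ℝ) < R := lt_of_lt_of_le one_pos hR1
    -- bounds on points of R • B
    have hnorm : ∀ y ∈ B, aξ ≤ ‖y‖ ∧ ‖y‖ ≤ ‖ξ‖ + δ := by
      intro y hy
      rw [hB, Metric.mem_ball, dist_eq_norm] at hy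
      constructor
      · have h1 : ‖ξ‖ - ‖y‖ ≤ ‖y - ξ‖ := by
          have := norm_sub_norm_le ξ y
          rwa [← norm_sub_rev y ξ] at this
        rw [haξ]; linarith
      · have h1 : ‖y‖ - ‖ξ‖ ≤ ‖y - ξ‖ := norm_sub_norm_le y ξ
        linarith
    have hSub : R • B ⊆ Ω := by
      rintro x ⟨y, hyB, rfl⟩
      have hyn := (hnorm y hyB).1
      have hnx : r₀ < ‖R • y‖ := by
        rw [norm_smul, Real.norm_eq_abs, abs_of_pos hRpos]
        have h1 : r₀ + 1 ≤ R * aξ := by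
          rw [div_le_iff₀ hapos] at hRr₀; linarith
        have h2 : R * aξ ≤ R * ‖y‖ := mul_le_mul_of_nonneg_left hyn hRpos.le
        linarith
      rw [hΩ, Set.mem_compl_iff]
      intro hmem
      have := hr₀ hmem
      rw [Metric.mem_closedBall, dist_zero_right] at this
      linarith
    set tR : ℝ := Cu * R ^ κu with htR
    set sR : ℝ := Cv * R ^ κv with hsR
    have htRpos : 0 < tR := by rw [htR]; positivity
    have hsRpos : 0 < sR := by rw [hsR]; positivity
    -- pointwise dichotomy
    have hsplit : R • B ⊆ ({x | tR ≤ |wu x|} ∩ Ω) ∪ ({x | sR ≤ |wv x|} ∩ Ω) := by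
      rintro x ⟨y, hyB, rfl⟩
      have hxΩ : R • y ∈ Ω := hSub ⟨y, hyB, rfl⟩
      obtain ⟨hyl, hyu⟩ := hnorm y hyB
      have hxnorm : ‖R • y‖ = R * ‖y‖ := by
        rw [norm_smul, Real.norm_eq_abs, abs_of_pos hRpos]
      have hrhol : aξ * R ≤ rho (R • y) := by
        have h1 := norm_le_rho (R • y)
        rw [hxnorm] at h1
        have h2 : R * aξ ≤ R * ‖y‖ := mul_le_mul_of_nonneg_left hyl hRpos.le
        calc aξ * R = R * aξ := mul_comm _ _
          _ ≤ R * ‖y‖ := h2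
          _ ≤ rho (R • y) := h1
      have hrhou : rho (R • y) ≤ bξ * R := by
        have h1 := rho_le (R • y)
        rw [hxnorm] at h1
        have h2 : R * ‖y‖ ≤ R * (‖ξ‖ + δ) := mul_le_mul_of_nonneg_left hyu hRpos.le
        have h3 : (1:ℝ) ≤ R * 1 := by rwa [mul_one]
        calc rho (R • y) ≤ 1 + R * ‖y‖ := h1
          _ ≤ 1 + R * (‖ξ‖ + δ) := add_le_add_right h2 1
          _ ≤ R * 1 + R * (‖ξ‖ + δ) := add_le_add_left h3 _
          _ = bξ * R := by rw [hbξ]; ring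
      have hwk : mk * R ^ (k - 1) ≤ rho (R • y) ^ (k - 1) :=
        weight_bound hapos habξ hRpos hrhol hrhou
      have hwl : ml * R ^ (l - 1) ≤ rho (R • y) ^ (l - 1) :=
        weight_bound hapos habξ hRpos hrhol hrhou
      have hlow : c * R ^ d ≤ |u (R • y) + v (R • y)| := by
        have := hbd R hRδ y hyB
        rwa [huv] at this
      have habs := abs_add_le (u (R • y)) (v (R • y))
      have hRd : (0:ℝ) < R ^ d := by positivity
      have hRκ : R ^ κu = R ^ (k - 1) * R ^ d := by
        rw [hκu, Real.rpow_add hRpos, Real.rpow_natCast]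
      have hRκ' : R ^ κv = R ^ (l - 1) * R ^ d := by
        rw [hκv, Real.rpow_add hRpos, Real.rpow_natCast]
      rcases le_or_gt (c * R ^ d / 2) |u (R • y)| with hcase | hcase
      · left
        refine ⟨?_, hxΩ⟩
        rw [Set.mem_setOf_eq, hwu]
        have h1 : |rho (R • y) ^ (k - 1) * u (R • y)| =
            rho (R • y) ^ (k - 1) * |u (R • y)| := by
          rw [abs_mul, abs_of_pos (Real.rpow_pos_of_pos (rho_pos _) _)]
        rw [h1, htR, hRκ]
        calc Cu * (R ^ (k - 1) * R ^ d)
            = (mk * R ^ (k - 1)) * (c * R ^ d / 2) := by rw [hCu]; ring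
          _ ≤ rho (R • y) ^ (k - 1) * |u (R • y)| := by
              apply mul_le_mul hwk hcase (by positivity)
              exact (Real.rpow_pos_of_pos (rho_pos _) _).le
      · right
        refine ⟨?_, hxΩ⟩
        have hcase' : c * R ^ d / 2 ≤ |v (R • y)| := half_bound hlow hcase
        rw [Set.mem_setOf_eq, hwv]
        have h1 : |rho (R • y) ^ (l - 1) * v (R • y)| =
            rho (R • y) ^ (l - 1) * |v (R • y)| := by
          rw [abs_mul, abs_of_pos (Real.rpow_pos_of_pos (rho_pos _) _)]
        rw [h1, hsR, hRκ']
        calc Cv * (R ^ (l - 1) * R ^ d)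
            = (ml * R ^ (l - 1)) * (c * R ^ d / 2) := by rw [hCv]; ring
          _ ≤ rho (R • y) ^ (l - 1) * |v (R • y)| := by
              apply mul_le_mul hwl hcase' (by positivity)
              exact (Real.rpow_pos_of_pos (rho_pos _) _).le
    -- measure estimate
    have hmeas : ENNReal.ofReal (R ^ (3:ℕ)) * volume B ≤
        μres {x | tR ≤ |wu x|} + μres {x | sR ≤ |wv x|} := by
      have h1 : volume (R • B) = ENNReal.ofReal (R ^ (3:ℕ)) * volume B := by
        rw [Measure.addHaar_smul_of_nonneg volume hRpos.le B]
        congr 2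
        rw [finrank_euclideanSpace_fin]
      calc ENNReal.ofReal (R ^ (3:ℕ)) * volume B = volume (R • B) := h1.symm
        _ ≤ volume (({x | tR ≤ |wu x|} ∩ Ω) ∪ ({x | sR ≤ |wv x|} ∩ Ω)) :=
            measure_mono hsplit
        _ ≤ volume ({x | tR ≤ |wu x|} ∩ Ω) + volume ({x | sR ≤ |wv x|} ∩ Ω) :=
            measure_union_le _ _
        _ = μres {x | tR ≤ |wu x|} + μres {x | sR ≤ |wv x|} := by
            rw [hμres, Measure.restrict_apply' hΩm, Measure.restrict_apply' hΩm]
    -- Chebyshev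
    have hsetu : {x : R3 | (ENNReal.ofReal tR) ≤ ‖wu x‖ₑ} = {x | tR ≤ |wu x|} := by
      ext x
      rw [Set.mem_setOf_eq, Set.mem_setOf_eq, ← ofReal_norm,
        ENNReal.ofReal_le_ofReal_iff (norm_nonneg _), Real.norm_eq_abs]
    have hsetv : {x : R3 | (ENNReal.ofReal sR) ≤ ‖wv x‖ₑ} = {x | sR ≤ |wv x|} := by
      ext x
      rw [Set.mem_setOf_eq, Set.mem_setOf_eq, ← ofReal_norm,
        ENNReal.ofReal_le_ofReal_iff (norm_nonneg _), Real.norm_eq_abs]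
    have hchebu : μres {x | tR ≤ |wu x|} ≤
        (ENNReal.ofReal tR)⁻¹ ^ p * eLpNorm wu P μres ^ p := by
      have h := meas_ge_le_mul_pow_eLpNorm_enorm μres hPne0 hPnt hu0.1
        (ε := ENNReal.ofReal tR)
        (by simp only [ne_eq, ENNReal.ofReal_eq_zero, not_le]; exact htRpos) (fun h => absurd h ENNReal.ofReal_ne_top)
      rw [hsetu, hPtr] at h
      exact h
    have hchebv : μres {x | sR ≤ |wv x|} ≤
        (ENNReal.ofReal sR)⁻¹ ^ q * eLpNorm wv Q μres ^ q := by
      have h := meas_ge_le_mul_pow_eLpNorm_enorm μres hQne0 hQnt hv0.1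
        (ε := ENNReal.ofReal sR)
        (by simp only [ne_eq, ENNReal.ofReal_eq_zero, not_le]; exact hsRpos) (fun h => absurd h ENNReal.ofReal_ne_top)
      rw [hsetv, hQtr] at h
      exact h
    have htot : ENNReal.ofReal (R ^ (3:ℕ)) * volume B ≤
        (ENNReal.ofReal tR)⁻¹ ^ p * eLpNorm wu P μres ^ p +
        (ENNReal.ofReal sR)⁻¹ ^ q * eLpNorm wv Q μres ^ q :=
      hmeas.trans (add_le_add hchebu hchebv)
    -- finiteness and passage to reals
    have hfu : (ENNReal.ofReal tR)⁻¹ ^ p * eLpNorm wu P μres ^ p ≠ ⊤ := by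
      apply ENNReal.mul_ne_top
      · exact ENNReal.rpow_ne_top_of_nonneg hp0.le
          (ENNReal.inv_ne_top.mpr
            (by simp only [ne_eq, ENNReal.ofReal_eq_zero, not_le]; exact htRpos))
      · exact ENNReal.rpow_ne_top_of_nonneg hp0.le hNufin
    have hfv : (ENNReal.ofReal sR)⁻¹ ^ q * eLpNorm wv Q μres ^ q ≠ ⊤ := by
      apply ENNReal.mul_ne_top
      · exact ENNReal.rpow_ne_top_of_nonneg hq0.le
          (ENNReal.inv_ne_top.mpr
            (by simp only [ne_eq, ENNReal.ofReal_eq_zero, not_le]; exact hsRpos))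
      · exact ENNReal.rpow_ne_top_of_nonneg hq0.le hNvfin
    have hreal := ENNReal.toReal_mono (by exact ENNReal.add_ne_top.mpr ⟨hfu, hfv⟩) htot
    rw [ENNReal.toReal_add hfu hfv, ENNReal.toReal_mul, ENNReal.toReal_mul,
      ENNReal.toReal_mul] at hreal
    rw [← ENNReal.toReal_rpow, ← ENNReal.toReal_rpow, ← ENNReal.toReal_rpow,
      ← ENNReal.toReal_rpow, ENNReal.toReal_inv, ENNReal.toReal_inv,
      ENNReal.toReal_ofReal htRpos.le, ENNReal.toReal_ofReal hsRpos.le,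
      ENNReal.toReal_ofReal (by positivity : (0:ℝ) ≤ R ^ (3:ℕ))] at hreal
    -- hreal : R ^ 3 * εB ≤ tR⁻¹ ^ p * Nu ^ p + sR⁻¹ ^ q * Nv ^ q
    have htRinv : tR⁻¹ ^ p * Nu ^ p = Au * (R ^ (-αu) * R ^ ((3:ℕ):ℝ)) := by
      rw [htR, Real.inv_rpow (by positivity), Real.mul_rpow hCupos.le (by positivity),
        ← Real.rpow_add hRpos, ← Real.rpow_mul hRpos.le]
      rw [show -αu + ((3:ℕ):ℝ) = -(κu * p) by rw [hαudef]; push_cast; ring,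
        Real.rpow_neg hRpos.le, mul_inv]
      rw [hAu]; field_simp
    have hsRinv : sR⁻¹ ^ q * Nv ^ q = Av * (R ^ (-αv) * R ^ ((3:ℕ):ℝ)) := by
      rw [hsR, Real.inv_rpow (by positivity), Real.mul_rpow hCvpos.le (by positivity),
        ← Real.rpow_add hRpos, ← Real.rpow_mul hRpos.le]
      rw [show -αv + ((3:ℕ):ℝ) = -(κv * q) by rw [hαvdef]; push_cast; ring,
        Real.rpow_neg hRpos.le, mul_inv]
      rw [hAv]; field_simp
    rw [htRinv, hsRinv] at hreal
    have hR3 : R ^ ((3:ℕ):ℝ) = R ^ (3:ℕ) := Real.rpow_natCast R 3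
    rw [hR3] at hreal
    have hR3pos : (0:ℝ) < R ^ (3:ℕ) := by positivity
    have hfin : εB * R ^ (3:ℕ) ≤ (Au * R ^ (-αu) + Av * R ^ (-αv)) * R ^ (3:ℕ) := by
      calc εB * R ^ (3:ℕ) = R ^ (3:ℕ) * εB := mul_comm _ _
        _ ≤ Au * (R ^ (-αu) * R ^ (3:ℕ)) + Av * (R ^ (-αv) * R ^ (3:ℕ)) := hreal
        _ = (Au * R ^ (-αu) + Av * R ^ (-αv)) * R ^ (3:ℕ) := by ring
    exact le_of_mul_le_mul_right hfin hR3pos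
  -- conclude by letting R → ∞
  have htend : Filter.Tendsto (fun R : ℝ => Au * R ^ (-αu) + Av * R ^ (-αv))
      Filter.atTop (nhds 0) := by
    have h1 := (tendsto_rpow_neg_atTop hαu).const_mul Au
    have h2 := (tendsto_rpow_neg_atTop hαv).const_mul Av
    simpa using h1.add h2
  have hev := htend.eventually_lt_const hεBpos
  obtain ⟨R, hRlt, hRge⟩ := (hev.and (Filter.eventually_ge_atTop R₀)).exists
  exact absurd (key R hRge) (not_le.mpr hRlt)


end
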